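/- arXiv:2203.05224 — 6 statements merged into one kernel-verified Lean document; each statement's English description precedes it below -/
import Mathlib

section
/- Let d ≥ 1, let X ⊆ ℤ^d be finite and lattice-convex, let Y ⊆ ℤ^d \ X be finite and nonempty, let ε > 0 with rc_ε(X,Y) ≤ k for the chosen integer k ≥ 1. Then the optimal value v*_cut of the LP relaxation of the cutting plane model equals 1, and the optimal value v*_com of the LP relaxation of the compact model satisfies v*_com ≥ 1; in particular v*_com ≥ v*_cut = 1. -/
/-- The canonical embedding of integer points into `ℝ^d`. -/
def toR {d : ℕ} (x : Fin d → ℤ) : Fin d → ℝ := fun j => (x j : ℝ)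

/-- A finite set `X ⊆ ℤ^d` is lattice-convex if `X = conv(X) ∩ ℤ^d`. -/
def LatticeConvex {d : ℕ} (X : Finset (Fin d → ℤ)) : Prop :=
  ∀ z : Fin d → ℤ, toR z ∈ convexHull ℝ (toR '' ↑X) → z ∈ X

/-- `I` is `ε`-separable from `X`. -/
def EpsSep {d : ℕ} (ε : ℝ) (X : Finset (Fin d → ℤ)) (I : Set (Fin d → ℤ)) : Prop :=
  ∃ (a : Fin d → ℝ) (β : ℝ), (∀ j, |a j| ≤ 1) ∧
    (∀ x ∈ X, ∑ j, a j * (x j : ℝ) ≤ β) ∧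
    (∀ y ∈ I, β + ε ≤ ∑ j, a j * (y j : ℝ))

/-- There is an `ε`-relaxation of `X` w.r.t. `Y` with `k` inequalities. -/
def HasEpsRelax {d : ℕ} (ε : ℝ) (X Y : Finset (Fin d → ℤ)) (k : ℕ) : Prop :=
  ∃ (a : Fin k → Fin d → ℝ) (β : Fin k → ℝ),
    (∀ i j, |a i j| ≤ 1) ∧
    (∀ i, ∀ x ∈ X, ∑ j, a i j * (x j : ℝ) ≤ β i) ∧
    (∀ y ∈ Y, ∃ i, β i + ε ≤ ∑ j, a i j * (y j : ℝ))

/-- `ρ_X = max{‖x‖_∞ : x ∈ X}` (the norm on `Fin d → ℝ` is the sup-norm). -/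
noncomputable def rho {d : ℕ} (X : Finset (Fin d → ℤ)) (h : X.Nonempty) : ℝ :=
  X.sup' h (fun x => ‖toR x‖)

/-- Feasibility for the LP relaxation of the compact model. -/
def ComFeas {d : ℕ} (ε M ρX : ℝ) (X Y : Finset (Fin d → ℤ)) (k : ℕ)
    (a : Fin k → Fin d → ℝ) (b : Fin k → ℝ)
    (s : (Fin d → ℤ) → Fin k → ℝ) (u : Fin k → ℝ) : Prop :=
  (∀ i j, |a i j| ≤ 1) ∧
  (∀ i, -(d * ρX) ≤ b i ∧ b i ≤ d * ρX) ∧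
  (∀ y ∈ Y, ∀ i, 0 ≤ s y i ∧ s y i ≤ 1) ∧
  (∀ i, 0 ≤ u i ∧ u i ≤ 1) ∧
  (∀ i, ∀ x ∈ X, ∑ j, a i j * (x j : ℝ) ≤ b i) ∧
  (∀ y ∈ Y, 1 ≤ ∑ i, s y i) ∧
  (∀ y ∈ Y, ∀ i, b i + ε - M * (1 - s y i) ≤ ∑ j, a i j * (y j : ℝ)) ∧
  (∀ y ∈ Y, ∀ i, s y i ≤ u i)

/-- Feasibility for the LP relaxation of the cutting plane model. -/
def CutFeas {d : ℕ} (ε : ℝ) (X Y : Finset (Fin d → ℤ)) (k : ℕ)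
    (s : (Fin d → ℤ) → Fin k → ℝ) (u : Fin k → ℝ) : Prop :=
  (∀ y ∈ Y, ∀ i, 0 ≤ s y i ∧ s y i ≤ 1) ∧
  (∀ i, 0 ≤ u i ∧ u i ≤ 1) ∧
  (∀ y ∈ Y, 1 ≤ ∑ i, s y i) ∧
  (∀ C : Finset (Fin d → ℤ), C ⊆ Y → ¬ EpsSep ε X ↑C →
    ∀ i, ∑ y ∈ C, s y i ≤ (C.card : ℝ) - 1) ∧
  (∀ y ∈ Y, ∀ i, s y i ≤ u i)


lemma abs_lin_le {d : ℕ} (a : Fin d → ℝ) (ha : ∀ j, |a j| ≤ 1)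
    (x : Fin d → ℤ) (ρ : ℝ) (hx : ‖toR x‖ ≤ ρ) :
    |∑ j, a j * (x j : ℝ)| ≤ d * ρ := by
  calc |∑ j, a j * (x j : ℝ)| ≤ ∑ j, |a j * (x j : ℝ)| := Finset.abs_sum_le_sum_abs _ _
    _ ≤ ∑ _j : Fin d, ρ := by
        apply Finset.sum_le_sum
        intro j _
        rw [abs_mul]
        have h1 : |(x j : ℝ)| ≤ ρ := by
          have := norm_le_pi_norm (toR x) j
          simp only [toR, Real.norm_eq_abs] at this
          exact this.trans hx
        calc |a j| * |(x j : ℝ)| ≤ 1 * |(x j : ℝ)| :=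
              mul_le_mul_of_nonneg_right (ha j) (abs_nonneg _)
          _ = |(x j : ℝ)| := one_mul _
          _ ≤ ρ := h1
    _ = d * ρ := by simp [Finset.sum_const, Finset.card_univ, nsmul_eq_mul]

set_option maxHeartbeats 2000000 in
/-- `v*_cut = 1` and `v*_com ≥ 1`, hence `v*_com ≥ v*_cut = 1`. -/
theorem stmt_2 {d : ℕ} (hd : 1 ≤ d) (X Y : Finset (Fin d → ℤ))
    (hXne : X.Nonempty) (hYne : Y.Nonempty)
    (hX : LatticeConvex X) (hXY : ∀ y ∈ Y, y ∉ X)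
    (ε : ℝ) (hε : 0 < ε) (k : ℕ) (hk : 1 ≤ k)
    (hrc : HasEpsRelax ε X Y k)
    (M : ℝ) (hM : d * (rho X hXne + rho Y hYne) + ε ≤ M) :
    sInf {v : ℝ | ∃ (s : (Fin d → ℤ) → Fin k → ℝ) (u : Fin k → ℝ),
        CutFeas ε X Y k s u ∧ v = ∑ i, u i} = 1 ∧
    1 ≤ sInf {v : ℝ | ∃ (a : Fin k → Fin d → ℝ) (b : Fin k → ℝ)
        (s : (Fin d → ℤ) → Fin k → ℝ) (u : Fin k → ℝ),
        ComFeas ε M (rho X hXne) X Y k a b s u ∧ v = ∑ i, u i} := by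
  classical
  obtain ⟨a, β, ha, haX, haY⟩ := hrc
  obtain ⟨y₀, hy₀⟩ := hYne
  have hk0 : (0:ℝ) < (k:ℝ) := by exact_mod_cast hk.trans_lt' (by norm_num)
  -- lower bound: any feasible point has value ≥ 1
  have lower : ∀ (s : (Fin d → ℤ) → Fin k → ℝ) (u : Fin k → ℝ),
      (∀ y ∈ Y, 1 ≤ ∑ i, s y i) → (∀ y ∈ Y, ∀ i, s y i ≤ u i) → 1 ≤ ∑ i, u i := by
    intro s u hsum hsu
    calc (1:ℝ) ≤ ∑ i, s y₀ i := hsum y₀ hy₀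
      _ ≤ ∑ i, u i := Finset.sum_le_sum fun i _ => hsu y₀ hy₀ i
  -- cut model feasible point with value 1
  have cutmem : (1:ℝ) ∈ {v : ℝ | ∃ (s : (Fin d → ℤ) → Fin k → ℝ) (u : Fin k → ℝ),
      CutFeas ε X Y k s u ∧ v = ∑ i, u i} := by
    refine ⟨fun _ _ => 1/(k:ℝ), fun _ => 1/(k:ℝ), ⟨?_, ?_, ?_, ?_, ?_⟩, ?_⟩
    · intro y _ i
      constructor
      · positivity
      · rw [div_le_one hk0]; exact_mod_cast hk
    · intro i
      constructor
      · positivity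
      · rw [div_le_one hk0]; exact_mod_cast hk
    · intro y _
      rw [Finset.sum_const, Finset.card_univ, Fintype.card_fin, nsmul_eq_mul,
        mul_one_div, div_self (ne_of_gt hk0)]
    · intro C hCY hC i
      -- C is nonempty
      have hCne : C.Nonempty := by
        rcases C.eq_empty_or_nonempty with h | h
        · exfalso; apply hC
          refine ⟨fun _ => 0, 0, by norm_num, by simp, ?_⟩
          intro y hy; rw [h] at hy; simp at hy
        · exact h
      -- |C| ≥ 2
      have hC2 : 2 ≤ C.card := by
        by_contra h
        push_neg at h
        have h1 : C.card = 1 := le_antisymm (by omega) hCne.card_pos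
        obtain ⟨y, rfl⟩ := Finset.card_eq_one.mp h1
        have hyY : y ∈ Y := hCY (Finset.mem_singleton_self y)
        obtain ⟨i₀, hi₀⟩ := haY y hyY
        apply hC
        refine ⟨a i₀, β i₀, ha i₀, haX i₀, ?_⟩
        intro z hz
        simp only [Finset.coe_singleton, Set.mem_singleton_iff] at hz
        subst hz; exact hi₀
      -- k ≥ 2
      have hk2 : 2 ≤ k := by
        by_contra h
        push_neg at h
        have hk1 : k = 1 := by omega
        apply hC
        have i₀ : Fin k := ⟨0, hk⟩
        refine ⟨a i₀, β i₀, ha i₀, haX i₀, ?_⟩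
        intro z hz
        have hzY : z ∈ Y := hCY (by exact_mod_cast hz)
        obtain ⟨i, hi⟩ := haY z hzY
        have : i = i₀ := Fin.ext (by omega)
        rwa [this] at hi
      rw [Finset.sum_const, nsmul_eq_mul, mul_one_div, div_le_iff₀ hk0]
      have hc2 : (2:ℝ) ≤ (C.card : ℝ) := by exact_mod_cast hC2
      have hk2' : (2:ℝ) ≤ (k:ℝ) := by exact_mod_cast hk2
      nlinarith [mul_nonneg (sub_nonneg.mpr hc2) (sub_nonneg.mpr hk2')]
    · intro y _ i; exact le_refl _
    · rw [Finset.sum_const, Finset.card_univ, Fintype.card_fin, nsmul_eq_mul,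
        mul_one_div, div_self (ne_of_gt hk0)]
  have cutlb : ∀ v ∈ {v : ℝ | ∃ (s : (Fin d → ℤ) → Fin k → ℝ) (u : Fin k → ℝ),
      CutFeas ε X Y k s u ∧ v = ∑ i, u i}, 1 ≤ v := by
    rintro v ⟨s, u, ⟨_, _, hsum, _, hsu⟩, rfl⟩
    exact lower s u hsum hsu
  constructor
  · exact le_antisymm (csInf_le ⟨1, cutlb⟩ cutmem) (le_csInf ⟨1, cutmem⟩ cutlb)
  · -- compact model
    have hρX : ∀ x ∈ X, ‖toR x‖ ≤ rho X hXne := by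
      intro x hx; unfold rho; exact Finset.le_sup' (fun x => ‖toR x‖) hx
    have hρY : ∀ y ∈ Y, ‖toR y‖ ≤ rho Y ⟨y₀, hy₀⟩ := by
      intro y hy; unfold rho; exact Finset.le_sup' (fun x => ‖toR x‖) hy
    have hρYeq : rho Y ⟨y₀, hy₀⟩ = rho Y ⟨y₀, hy₀⟩ := rfl
    set b : Fin k → ℝ := fun i => X.sup' hXne (fun x => ∑ j, a i j * (x j : ℝ)) with hb
    have hbX : ∀ i, ∀ x ∈ X, ∑ j, a i j * (x j : ℝ) ≤ b i :=
      fun i x hx => Finset.le_sup' (fun x => ∑ j, a i j * (x j : ℝ)) hx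
    have hbub : ∀ i, b i ≤ d * rho X hXne := by
      intro i
      apply Finset.sup'_le
      intro x hx
      exact (le_abs_self _).trans (abs_lin_le (a i) (ha i) x _ (hρX x hx))
    have hblb : ∀ i, -(d * rho X hXne) ≤ b i := by
      intro i
      obtain ⟨x₀, hx₀⟩ := id hXne
      rw [hb]
      refine le_trans ?_ (Finset.le_sup' (fun x => ∑ j, a i j * (x j : ℝ)) hx₀)
      exact neg_le_of_abs_le (abs_lin_le (a i) (ha i) x₀ _ (hρX x₀ hx₀))
    have hbβ : ∀ i, b i ≤ β i := by
      intro i; rw [hb]; exact Finset.sup'_le _ _ (haX i)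
    have haYlb : ∀ y ∈ Y, ∀ i, -(d * rho Y ⟨y₀, hy₀⟩) ≤ ∑ j, a i j * (y j : ℝ) := by
      intro y hy i
      exact neg_le_of_abs_le (abs_lin_le (a i) (ha i) y _ (hρY y hy))
    set s : (Fin d → ℤ) → Fin k → ℝ :=
      fun y i => if β i + ε ≤ ∑ j, a i j * (y j : ℝ) then 1 else 0 with hs
    have commem : ((k:ℝ)) ∈ {v : ℝ | ∃ (a : Fin k → Fin d → ℝ) (b : Fin k → ℝ)
        (s : (Fin d → ℤ) → Fin k → ℝ) (u : Fin k → ℝ),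
        ComFeas ε M (rho X hXne) X Y k a b s u ∧ v = ∑ i, u i} := by
      refine ⟨a, b, s, fun _ => 1, ⟨ha, fun i => ⟨hblb i, hbub i⟩, ?_, ?_, hbX, ?_, ?_, ?_⟩, ?_⟩
      · intro y _ i; simp only [hs]; split_ifs <;> norm_num
      · intro i; norm_num
      · intro y hy
        obtain ⟨i₀, hi₀⟩ := haY y hy
        have h1 : s y i₀ = 1 := by simp only [hs]; rw [if_pos hi₀]
        calc (1:ℝ) = s y i₀ := h1.symm
          _ ≤ ∑ i, s y i := by
              apply Finset.single_le_sum (f := fun i => s y i) ?_ (Finset.mem_univ i₀)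
              intro i _; simp only [hs]; split_ifs <;> norm_num
      · intro y hy i
        simp only [hs]
        split_ifs with h
        · simp only [sub_self, mul_zero]
          have := hbβ i
          linarith [h]
        · simp only [sub_zero, mul_one]
          have h1 := haYlb y hy i
          have h2 := hbub i
          linarith
      · intro y _ i; simp only [hs]; split_ifs <;> norm_num
      · simp
    apply le_csInf ⟨(k:ℝ), commem⟩
    rintro v ⟨a', b', s', u', ⟨_, _, _, _, _, hsum, _, hsu⟩, rfl⟩
    exact lower s' u' hsum hsu
end

section
/- Let d ≥ 1, let X ⊆ ℤ^d be finite and lattice-convex, let Y ⊆ ℤ^d \ X be finite and nonempty, let ε > 0 with rc_ε(X,Y) ≤ k for the chosen integer k ≥ 1, and assume ε ≤ (d−1)(ρ_X + ρ_Y). Then the optimal value v*_com of the LP relaxation of the compact model equals 1. -/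
/-- if moreover `ε ≤ (d-1)(ρ_X + ρ_Y)`, then `v*_com = 1`. -/
theorem stmt_3 {d : ℕ} (hd : 1 ≤ d) (X Y : Finset (Fin d → ℤ))
    (hXne : X.Nonempty) (hYne : Y.Nonempty)
    (hX : LatticeConvex X) (hXY : ∀ y ∈ Y, y ∉ X)
    (ε : ℝ) (hε : 0 < ε) (k : ℕ) (hk : 1 ≤ k)
    (hrc : HasEpsRelax ε X Y k)
    (M : ℝ) (hM : d * (rho X hXne + rho Y hYne) + ε ≤ M)
    (hεd : ε ≤ ((d : ℝ) - 1) * (rho X hXne + rho Y hYne)) :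
    sInf {v : ℝ | ∃ (a : Fin k → Fin d → ℝ) (b : Fin k → ℝ)
        (s : (Fin d → ℤ) → Fin k → ℝ) (u : Fin k → ℝ),
        ComFeas ε M (rho X hXne) X Y k a b s u ∧ v = ∑ i, u i} = 1 := by
  obtain ⟨x0, hx0⟩ := id hXne
  obtain ⟨y0, hy0⟩ := id hYne
  have hrX : 0 ≤ rho X hXne := by
    unfold rho
    exact le_trans (norm_nonneg (toR x0)) (Finset.le_sup' (fun z => ‖toR z‖) hx0)
  have hrY : 0 ≤ rho Y hYne := by
    unfold rho
    exact le_trans (norm_nonneg (toR y0)) (Finset.le_sup' (fun z => ‖toR z‖) hy0)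
  have hd1 : (1 : ℝ) ≤ d := by exact_mod_cast hd
  have hεd' : ε ≤ (d : ℝ) * (rho X hXne + rho Y hYne) := by nlinarith
  have hM2 : 2 * ε ≤ M := by linarith
  have hlb : ∀ v ∈ {v : ℝ | ∃ (a : Fin k → Fin d → ℝ) (b : Fin k → ℝ)
        (s : (Fin d → ℤ) → Fin k → ℝ) (u : Fin k → ℝ),
        ComFeas ε M (rho X hXne) X Y k a b s u ∧ v = ∑ i, u i}, 1 ≤ v := by
    rintro v ⟨a, b, s, u, ⟨_, _, _, _, _, hs1, _, hsu⟩, rfl⟩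
    calc (1 : ℝ) ≤ ∑ i, s y0 i := hs1 y0 hy0
      _ ≤ ∑ i, u i := Finset.sum_le_sum fun i _ => hsu y0 hy0 i
  have hmem : (1 : ℝ) ∈ {v : ℝ | ∃ (a : Fin k → Fin d → ℝ) (b : Fin k → ℝ)
        (s : (Fin d → ℤ) → Fin k → ℝ) (u : Fin k → ℝ),
        ComFeas ε M (rho X hXne) X Y k a b s u ∧ v = ∑ i, u i} := by
    rcases Nat.lt_or_ge k 2 with h2 | h2
    · -- k = 1
      have hk1 : k = 1 := by omega
      subst hk1
      obtain ⟨a, β, ha1, haX, haY⟩ := hrc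
      refine ⟨a, fun i => X.sup' hXne (fun x => ∑ j, a i j * (x j : ℝ)),
        fun _ _ => 1, fun _ => 1, ⟨ha1, ?_, ?_, ?_, ?_, ?_, ?_, ?_⟩, ?_⟩
      · intro i
        have habs : ∀ x ∈ X, |∑ j, a i j * (x j : ℝ)| ≤ d * rho X hXne := by
          intro x hx
          calc |∑ j, a i j * (x j : ℝ)| ≤ ∑ j, |a i j * (x j : ℝ)| :=
                Finset.abs_sum_le_sum_abs _ _
            _ ≤ ∑ _j : Fin d, rho X hXne := by
                refine Finset.sum_le_sum fun j _ => ?_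
                rw [abs_mul]
                have hxj : |((x j : ℝ))| ≤ rho X hXne := by
                  have h1 : ‖toR x j‖ ≤ ‖toR x‖ := norm_le_pi_norm (toR x) j
                  have h2 : ‖toR x‖ ≤ rho X hXne := by
                    unfold rho; exact Finset.le_sup' (fun z => ‖toR z‖) hx
                  simpa [toR] using h1.trans h2
                calc |a i j| * |((x j : ℝ))| ≤ 1 * rho X hXne :=
                      mul_le_mul (ha1 i j) hxj (abs_nonneg _) zero_le_one
                  _ = rho X hXne := one_mul _
            _ = d * rho X hXne := by simp [Finset.sum_const, mul_comm]
        dsimp only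
        constructor
        · obtain ⟨x, hx, hxe⟩ := Finset.exists_mem_eq_sup' hXne
            (fun x => ∑ j, a i j * (x j : ℝ))
          rw [hxe]
          have := (abs_le.mp (habs x hx)).1
          linarith
        · exact Finset.sup'_le _ _ fun x hx => (abs_le.mp (habs x hx)).2
      · intro y _ i; norm_num
      · intro i; norm_num
      · intro i x hx; exact Finset.le_sup' (fun x => ∑ j, a i j * (x j : ℝ)) hx
      · intro y _; simp
      · intro y hy i
        obtain ⟨i', hi'⟩ := haY y hy
        have hii : i' = i := Subsingleton.elim _ _
        rw [hii] at hi'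
        have hbi : X.sup' hXne (fun x => ∑ j, a i j * (x j : ℝ)) ≤ β i :=
          Finset.sup'_le _ _ fun x hx => haX i x hx
        dsimp only
        have hz : M * (1 - (1:ℝ)) = 0 := by ring
        rw [hz]
        linarith
      · intro y _ i; norm_num
      · simp
    · -- k ≥ 2
      have hk0 : (0:ℝ) < k := by positivity
      have hk0' : (k:ℝ) ≠ 0 := ne_of_gt hk0
      refine ⟨fun _ _ => 0, fun _ => 0, fun _ _ => 1 / k, fun _ => 1 / k,
        ⟨?_, ?_, ?_, ?_, ?_, ?_, ?_, ?_⟩, ?_⟩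
      · intro i j; norm_num
      · intro i
        dsimp only
        constructor <;> nlinarith
      · intro y _ i
        refine ⟨by positivity, ?_⟩
        rw [div_le_one hk0]; exact_mod_cast hk
      · intro i
        refine ⟨by positivity, ?_⟩
        rw [div_le_one hk0]; exact_mod_cast hk
      · intro i x _; simp
      · intro y _
        simp only [Finset.sum_const, Finset.card_univ, Fintype.card_fin,
          nsmul_eq_mul, mul_one_div, div_self hk0']
        exact le_refl 1
      · intro y _ i
        have hk2 : (2:ℝ) ≤ k := by exact_mod_cast h2
        have h12 : (1:ℝ)/k ≤ 1/2 := by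
          apply one_div_le_one_div_of_le <;> linarith
        have hM0 : 0 ≤ M := by linarith
        have hh : M * (1/2) ≤ M * (1 - 1/(k:ℝ)) := by nlinarith
        dsimp only
        simp only [zero_mul, Finset.sum_const_zero]
        nlinarith
      · intro y _ i; exact le_refl _
      · simp only [Finset.sum_const, Finset.card_univ, Fintype.card_fin,
          nsmul_eq_mul, mul_one_div, div_self hk0']
  exact le_antisymm (csInf_le ⟨1, hlb⟩ hmem) (le_csInf ⟨1, hmem⟩ hlb)
end

section
/- Let d ≥ 1, let X ⊆ ℤ^d be finite and lattice-convex, let Y ⊆ ℤ^d \ X be finite, and let ε > 0. If H ⊆ Y is a hiding set for X and I ⊆ Y is ε-separable from X, then |I ∩ H| ≤ 1. Equivalently, a single linear inequality that is valid for X cannot ε-separate two distinct points of a hiding set from X. -/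
/-- `H` is a hiding set for `X`. -/
def IsHidingSet {d : ℕ} (X : Finset (Fin d → ℤ)) (H : Set (Fin d → ℤ)) : Prop :=
  (∀ h ∈ H, toR h ∈ affineSpan ℝ (toR '' ↑X) ∧ h ∉ X) ∧
  (∀ y₁ ∈ H, ∀ y₂ ∈ H, y₁ ≠ y₂ →
    (convexHull ℝ {toR y₁, toR y₂} ∩ convexHull ℝ (toR '' ↑X)).Nonempty)

/-- a set `I ⊆ Y` that is `ε`-separable from `X` meets any hiding set
`H ⊆ Y` for `X` in at most one point. -/
theorem stmt_6 {d : ℕ} (hd : 1 ≤ d) (X Y : Finset (Fin d → ℤ))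
    (hX : LatticeConvex X) (hXY : ∀ y ∈ Y, y ∉ X) (ε : ℝ) (hε : 0 < ε)
    (H I : Finset (Fin d → ℤ))
    (hHY : H ⊆ Y) (hH : IsHidingSet X ↑H)
    (hIY : I ⊆ Y) (hI : EpsSep ε X ↑I) :
    (I ∩ H).card ≤ 1 := by
  obtain ⟨a, β, _, haX, haI⟩ := hI
  set L : (Fin d → ℝ) →ₗ[ℝ] ℝ :=
    { toFun := fun v => ∑ j, a j * v j
      map_add' := by intro u v; simp [mul_add, Finset.sum_add_distrib]
      map_smul' := by
        intro c v
        simp [Finset.mul_sum, mul_comm, mul_assoc, mul_left_comm] } with hL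
  rw [Finset.card_le_one]
  intro y₁ hy₁ y₂ hy₂
  by_contra hne
  simp only [Finset.mem_inter] at hy₁ hy₂
  obtain ⟨z, hz₁, hz₂⟩ := hH.2 y₁ hy₁.2 y₂ hy₂.2 hne
  have hconv1 : Convex ℝ {v : Fin d → ℝ | β + ε ≤ L v} :=
    convex_halfSpace_ge L.isLinear (β + ε)
  have hconv2 : Convex ℝ {v : Fin d → ℝ | L v ≤ β} :=
    convex_halfSpace_le L.isLinear β
  have h1 : β + ε ≤ L z := by
    have : convexHull ℝ {toR y₁, toR y₂} ⊆ {v : Fin d → ℝ | β + ε ≤ L v} := by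
      apply convexHull_min _ hconv1
      intro v hv
      rcases hv with h | h
      · subst h; exact haI y₁ hy₁.1
      · simp only [Set.mem_singleton_iff] at h; subst h; exact haI y₂ hy₂.1
    exact this hz₁
  have h2 : L z ≤ β := by
    have : convexHull ℝ (toR '' ↑X) ⊆ {v : Fin d → ℝ | L v ≤ β} := by
      apply convexHull_min _ hconv2
      rintro v ⟨x, hx, rfl⟩
      exact haX x hx
    exact this hz₂
  linarith
end

section
/- Let Y be a finite nonempty set and ℐ' a finite family of subsets of Y such that every y ∈ Y lies in some member of ℐ'. Let z* ∈ ℝ_+^{ℐ'} be an optimal solution of the covering LP: minimize Σ_{I∈ℐ'} z_I subject to Σ_{I∈ℐ', y∈I} z_I ≥ 1 for all y ∈ Y and z ≥ 0. If z* has a non-integral coordinate, then there exist two distinct sets I, J ∈ ℐ' with z*_I ∉ ℤ and z*_J ∉ ℤ such that I ∩ J ≠ ∅ and the symmetric difference I Δ J ≠ ∅. -/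
open Finset

lemma int_sum_aux {α : Type*} (s : Finset (Finset α)) (z : Finset α → ℝ)
    (h : ∀ J ∈ s, ∃ n : ℤ, z J = n) : ∃ n : ℤ, ∑ J ∈ s, z J = n := by
  classical
  refine Finset.sum_induction z (fun x => ∃ n : ℤ, x = (n : ℝ)) ?_ ⟨0, by simp⟩ h
  rintro a b ⟨m, rfl⟩ ⟨n, rfl⟩
  exact ⟨m + n, by push_cast; ring⟩

/-- Ryan–Foster branching candidates exist: if an optimal solution of
the covering LP over a finite family `𝓘` of subsets of `Y` has a non-integral
coordinate, then there are two distinct members `I, J ∈ 𝓘` with non-integral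
coordinates such that `I ∩ J ≠ ∅` and `I Δ J ≠ ∅`. -/
theorem stmt_8 {α : Type*} [DecidableEq α] (Y : Finset α) (hY : Y.Nonempty)
    (𝓘 : Finset (Finset α)) (hsub : ∀ I ∈ 𝓘, I ⊆ Y)
    (hcovfam : ∀ y ∈ Y, ∃ I ∈ 𝓘, y ∈ I)
    (z : Finset α → ℝ)
    (hz0 : ∀ I, 0 ≤ z I)
    (hzcov : ∀ y ∈ Y, 1 ≤ ∑ I ∈ 𝓘.filter (fun I => y ∈ I), z I)
    (hopt : ∀ w : Finset α → ℝ, (∀ I, 0 ≤ w I) →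
      (∀ y ∈ Y, 1 ≤ ∑ I ∈ 𝓘.filter (fun I => y ∈ I), w I) →
      ∑ I ∈ 𝓘, z I ≤ ∑ I ∈ 𝓘, w I)
    (hfrac : ∃ I ∈ 𝓘, ¬ ∃ n : ℤ, z I = n) :
    ∃ I ∈ 𝓘, ∃ J ∈ 𝓘, I ≠ J ∧ (¬ ∃ n : ℤ, z I = n) ∧ (¬ ∃ n : ℤ, z J = n) ∧
      (I ∩ J).Nonempty ∧ (symmDiff I J).Nonempty := by
  classical
  obtain ⟨I, hI𝓘, hIfrac⟩ := hfrac
  have hzIpos : 0 < z I := by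
    rcases lt_or_eq_of_le (hz0 I) with h | h
    · exact h
    · exact absurd ⟨(0 : ℤ), by simp [← h]⟩ hIfrac
  -- there is a tight constraint at some y ∈ I
  have hkey : ∃ y ∈ I, ∑ J ∈ 𝓘.filter (fun J => y ∈ J), z J = 1 := by
    by_contra hcon
    push_neg at hcon
    have hslack : ∀ y ∈ I, 1 < ∑ J ∈ 𝓘.filter (fun J => y ∈ J), z J := fun y hy =>
      lt_of_le_of_ne (hzcov y (hsub I hI𝓘 hy)) (Ne.symm (hcon y hy))
    set s : Finset ℝ :=
      insert (z I) (I.image (fun y => (∑ J ∈ 𝓘.filter (fun J => y ∈ J), z J) - 1)) with hs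
    have hsne : s.Nonempty := insert_nonempty _ _
    set ε := s.min' hsne with hε
    have hspos : ∀ x ∈ s, 0 < x := by
      intro x hx
      rcases mem_insert.1 hx with h | h
      · exact h ▸ hzIpos
      · obtain ⟨y, hy, rfl⟩ := mem_image.1 h
        exact sub_pos.2 (hslack y hy)
    have hεpos : 0 < ε := hspos _ (s.min'_mem hsne)
    have hεI : ε ≤ z I := min'_le _ _ (mem_insert_self _ _)
    have hεy : ∀ y ∈ I, ε ≤ (∑ J ∈ 𝓘.filter (fun J => y ∈ J), z J) - 1 := by
      intro y hy
      exact min'_le _ _ (mem_insert_of_mem (mem_image_of_mem _ hy))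
    set w : Finset α → ℝ := fun J => z J - (if J = I then ε else 0) with hw
    have hw0 : ∀ J, 0 ≤ w J := by
      intro J
      by_cases h : J = I <;> simp [hw, h]
      · linarith
      · exact hz0 J
    have hsumw : ∀ t : Finset (Finset α),
        ∑ J ∈ t, w J = (∑ J ∈ t, z J) - (if I ∈ t then ε else 0) := by
      intro t
      rw [hw]
      rw [Finset.sum_sub_distrib, Finset.sum_ite_eq' t I (fun _ => ε)]
    have hwcov : ∀ y ∈ Y, 1 ≤ ∑ J ∈ 𝓘.filter (fun J => y ∈ J), w J := by
      intro y hy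
      rw [hsumw]
      by_cases hyI : y ∈ I
      · have hImem : I ∈ 𝓘.filter (fun J => y ∈ J) := mem_filter.2 ⟨hI𝓘, hyI⟩
        rw [if_pos hImem]
        have := hεy y hyI
        linarith
      · have hImem : I ∉ 𝓘.filter (fun J => y ∈ J) := fun h => hyI (mem_filter.1 h).2
        rw [if_neg hImem, sub_zero]
        exact hzcov y hy
    have := hopt w hw0 hwcov
    rw [hsumw, if_pos hI𝓘] at this
    linarith
  obtain ⟨y, hyI, htight⟩ := hkey
  have hImem : I ∈ 𝓘.filter (fun J => y ∈ J) := mem_filter.2 ⟨hI𝓘, hyI⟩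
  have hsplit : ∑ J ∈ (𝓘.filter (fun J => y ∈ J)).erase I, z J + z I
      = ∑ J ∈ 𝓘.filter (fun J => y ∈ J), z J := Finset.sum_erase_add _ _ hImem
  have hTfrac : ¬ ∃ n : ℤ, (∑ J ∈ (𝓘.filter (fun J => y ∈ J)).erase I, z J) = n := by
    rintro ⟨n, hn⟩
    apply hIfrac
    refine ⟨1 - n, ?_⟩
    push_cast
    rw [htight] at hsplit
    linarith
  have hJex : ∃ J ∈ (𝓘.filter (fun J => y ∈ J)).erase I, ¬ ∃ n : ℤ, z J = n := by
    by_contra h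
    push_neg at h
    exact hTfrac (int_sum_aux _ _ (fun J hJ => by
      obtain ⟨n, hn⟩ := h J hJ
      exact ⟨n, hn⟩))
  obtain ⟨J, hJmem, hJfrac⟩ := hJex
  obtain ⟨hJne, hJfil⟩ := mem_erase.1 hJmem
  obtain ⟨hJ𝓘, hyJ⟩ := mem_filter.1 hJfil
  refine ⟨I, hI𝓘, J, hJ𝓘, Ne.symm hJne, hIfrac, hJfrac, ⟨y, mem_inter.2 ⟨hyI, hyJ⟩⟩, ?_⟩
  rw [Finset.nonempty_iff_ne_empty]
  intro h
  apply hJne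
  have : symmDiff I J = (⊥ : Finset α) := h
  exact (symmDiff_eq_bot.1 this).symm
end

section
/- Let d ≥ 1, let X ⊆ ℤ^d be finite, nonempty and lattice-convex, let Y ⊆ ℤ^d \ X be finite and nonempty, let ε > 0 be such that rc_ε(X,Y) exists, let k ≥ rc_ε(X,Y), and let M ≥ d(ρ_X + ρ_Y) + ε. Then the optimal value of the compact mixed-integer program (with binary variables s and u) equals rc_ε(X,Y). -/
/-- `rc_ε(X,Y)`: the smallest number of inequalities in an `ε`-relaxation. -/
noncomputable def rcEps {d : ℕ} (ε : ℝ) (X Y : Finset (Fin d → ℤ)) : ℕ :=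
  sInf {k : ℕ | HasEpsRelax ε X Y k}

/-- Feasibility for the compact mixed-integer program (binary `s`, `u`). -/
def ComMIPFeas {d : ℕ} (ε M ρX : ℝ) (X Y : Finset (Fin d → ℤ)) (k : ℕ)
    (a : Fin k → Fin d → ℝ) (b : Fin k → ℝ)
    (s : (Fin d → ℤ) → Fin k → ℝ) (u : Fin k → ℝ) : Prop :=
  (∀ i j, |a i j| ≤ 1) ∧
  (∀ i, -(d * ρX) ≤ b i ∧ b i ≤ d * ρX) ∧
  (∀ y ∈ Y, ∀ i, s y i = 0 ∨ s y i = 1) ∧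
  (∀ i, u i = 0 ∨ u i = 1) ∧
  (∀ i, ∀ x ∈ X, ∑ j, a i j * (x j : ℝ) ≤ b i) ∧
  (∀ y ∈ Y, 1 ≤ ∑ i, s y i) ∧
  (∀ y ∈ Y, ∀ i, b i + ε - M * (1 - s y i) ≤ ∑ j, a i j * (y j : ℝ)) ∧
  (∀ y ∈ Y, ∀ i, s y i ≤ u i)

lemma toR_abs_le {d : ℕ} (z : Fin d → ℤ) (j : Fin d) : |(z j : ℝ)| ≤ ‖toR z‖ := by
  have := norm_le_pi_norm (toR z) j
  simpa [toR, Real.norm_eq_abs] using this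

lemma abs_dot_le {d : ℕ} {a : Fin d → ℝ} (ha : ∀ j, |a j| ≤ 1) {z : Fin d → ℤ} {ρ : ℝ}
    (hz : ‖toR z‖ ≤ ρ) : |∑ j, a j * (z j : ℝ)| ≤ d * ρ := by
  calc |∑ j, a j * (z j : ℝ)| ≤ ∑ j, |a j * (z j : ℝ)| := Finset.abs_sum_le_sum_abs _ _
    _ ≤ ∑ _j : Fin d, ρ := by
        refine Finset.sum_le_sum fun j _ => ?_
        rw [abs_mul]
        calc |a j| * |(z j : ℝ)| ≤ 1 * ρ :=
              mul_le_mul (ha j) ((toR_abs_le z j).trans hz) (abs_nonneg _) zero_le_one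
          _ = ρ := one_mul ρ
    _ = d * ρ := by simp [Finset.sum_const, nsmul_eq_mul]

/-- From a feasible MIP solution we get an `ε`-relaxation of size `∑ u` (= number of
used inequalities). -/
lemma feas_gives_relax {d k : ℕ} {ε M ρX : ℝ} {X Y : Finset (Fin d → ℤ)}
    {a : Fin k → Fin d → ℝ} {b : Fin k → ℝ}
    {s : (Fin d → ℤ) → Fin k → ℝ} {u : Fin k → ℝ}
    (hf : ComMIPFeas ε M ρX X Y k a b s u) :
    HasEpsRelax ε X Y (Finset.univ.filter (fun i => u i = 1)).card ∧
      (∑ i, u i) = ((Finset.univ.filter (fun i => u i = 1)).card : ℝ) := by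
  obtain ⟨ha, hb, hsbin, hubin, hXc, hsum, hbigM, hsu⟩ := hf
  set I : Finset (Fin k) := Finset.univ.filter (fun i => u i = 1) with hI
  constructor
  · refine ⟨fun i => a (I.orderEmbOfFin rfl i), fun i => b (I.orderEmbOfFin rfl i),
      fun i j => ha _ j, fun i x hx => hXc _ x hx, fun y hy => ?_⟩
    -- find i0 with s y i0 = 1
    have hex1 : ∃ i0, s y i0 = 1 := by
      by_contra hno
      push_neg at hno
      have h0 : ∑ i, s y i = 0 :=
        Finset.sum_eq_zero fun i _ => (hsbin y hy i).resolve_right (hno i)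
      have := hsum y hy
      rw [h0] at this; linarith
    obtain ⟨i0, hi0⟩ := hex1
    have hu1 : u i0 = 1 := by
      have h1 := hsu y hy i0
      rw [hi0] at h1
      rcases hubin i0 with h | h
      · rw [h] at h1; linarith
      · exact h
    have hi0I : i0 ∈ I := Finset.mem_filter.mpr ⟨Finset.mem_univ _, hu1⟩
    have hrange : i0 ∈ Set.range (I.orderEmbOfFin rfl : Fin I.card ↪o Fin k) := by
      rw [Finset.range_orderEmbOfFin]; exact_mod_cast hi0I
    obtain ⟨i', hi'⟩ := hrange
    refine ⟨i', ?_⟩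
    have := hbigM y hy i0
    rw [hi0] at this
    simp only [hi']
    linarith
  · have h1 : (∑ i ∈ I, u i) = ∑ i, u i := by
      refine Finset.sum_subset (Finset.subset_univ I) fun i _ hiI => ?_
      rcases hubin i with h | h
      · exact h
      · exact absurd (by simp [hI, h] : i ∈ I) hiI
    have h2 : (∑ i ∈ I, u i) = ∑ _i ∈ I, (1 : ℝ) :=
      Finset.sum_congr rfl fun i hi => (Finset.mem_filter.mp hi).2
    rw [← h1, h2, Finset.sum_const, nsmul_eq_mul, mul_one]

/-- the optimal value of the compact mixed-integer program equals
`rc_ε(X,Y)` whenever `k ≥ rc_ε(X,Y)` and `M ≥ d(ρ_X+ρ_Y)+ε`. -/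
theorem stmt_15 {d : ℕ} (hd : 1 ≤ d) (X Y : Finset (Fin d → ℤ))
    (hXne : X.Nonempty) (hYne : Y.Nonempty)
    (hX : LatticeConvex X) (hXY : ∀ y ∈ Y, y ∉ X)
    (ε : ℝ) (hε : 0 < ε) (hex : ∃ m, HasEpsRelax ε X Y m)
    (k : ℕ) (hk1 : 1 ≤ k) (hk : rcEps ε X Y ≤ k)
    (M : ℝ) (hM : d * (rho X hXne + rho Y hYne) + ε ≤ M) :
    sInf {v : ℝ | ∃ (a : Fin k → Fin d → ℝ) (b : Fin k → ℝ)
        (s : (Fin d → ℤ) → Fin k → ℝ) (u : Fin k → ℝ),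
        ComMIPFeas ε M (rho X hXne) X Y k a b s u ∧ v = ∑ i, u i} =
      (rcEps ε X Y : ℝ) := by
  set ρX := rho X hXne with hρXdef
  set ρY := rho Y hYne with hρYdef
  set m := rcEps ε X Y with hmdef
  have hρXle : ∀ x ∈ X, ‖toR x‖ ≤ ρX := fun x hx => Finset.le_sup' (fun x => ‖toR x‖) hx
  have hρYle : ∀ y ∈ Y, ‖toR y‖ ≤ ρY := fun y hy => Finset.le_sup' (fun y => ‖toR y‖) hy
  have hρX0 : 0 ≤ ρX := le_trans (norm_nonneg _) (hρXle _ hXne.choose_spec)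
  have hρY0 : 0 ≤ ρY := le_trans (norm_nonneg _) (hρYle _ hYne.choose_spec)
  have hdρ0 : (0 : ℝ) ≤ d * (ρX + ρY) :=
    mul_nonneg (Nat.cast_nonneg d) (add_nonneg hρX0 hρY0)
  have hdρX0 : (0 : ℝ) ≤ d * ρX := mul_nonneg (Nat.cast_nonneg d) hρX0
  -- the optimal relaxation
  have hmem : HasEpsRelax ε X Y m := Nat.sInf_mem hex
  obtain ⟨a0, β0, ha0, hX0, hY0⟩ := hmem
  have hm1 : 1 ≤ m := by
    rcases Nat.eq_zero_or_pos m with h | h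
    · exfalso
      obtain ⟨y, hy⟩ := hYne
      obtain ⟨i, -⟩ := hY0 y hy
      exact Fin.elim0 (Fin.cast h i)
    · exact h
  have hmk : m ≤ k := hk
  -- constructed feasible point for the MIP
  set a' : Fin k → Fin d → ℝ := fun i => if h : (i : ℕ) < m then a0 ⟨i, h⟩ else 0 with ha'
  set b' : Fin k → ℝ :=
    fun i => if h : (i : ℕ) < m then
      X.sup' hXne (fun x => ∑ j, a0 ⟨i, h⟩ j * (x j : ℝ)) else 0 with hb'
  set c : (Fin d → ℤ) → Fin k :=
    fun y => if hy : y ∈ Y then Fin.castLE hmk (hY0 y hy).choose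
      else ⟨0, lt_of_lt_of_le hm1 hmk⟩ with hc
  set s' : (Fin d → ℤ) → Fin k → ℝ := fun y i => if i = c y then 1 else 0 with hs'
  set u' : Fin k → ℝ := fun i => if (i : ℕ) < m then 1 else 0 with hu'
  have hbub : ∀ (i : Fin k) (h : (i : ℕ) < m), b' i ≤ (d : ℝ) * ρX := by
    intro i h
    rw [hb']; simp only [dif_pos h]
    refine Finset.sup'_le _ _ fun x hx => ?_
    exact le_trans (le_abs_self _) (abs_dot_le (ha0 _) (hρXle x hx))
  have hblb : ∀ (i : Fin k) (h : (i : ℕ) < m), -((d : ℝ) * ρX) ≤ b' i := by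
    intro i h
    rw [hb']; simp only [dif_pos h]
    obtain ⟨x, hx⟩ := hXne
    refine le_trans ?_ (Finset.le_sup' _ hx)
    have := abs_dot_le (ha0 ⟨i, h⟩) (hρXle x hx)
    exact neg_le_of_abs_le this
  have hbβ : ∀ (i : Fin k) (h : (i : ℕ) < m), b' i ≤ β0 ⟨i, h⟩ := by
    intro i h
    rw [hb']; simp only [dif_pos h]
    exact Finset.sup'_le _ _ fun x hx => hX0 _ x hx
  have hcmem : ∀ y ∈ Y, ((c y : ℕ) < m) := by
    intro y hy
    rw [hc]; simp only [dif_pos hy]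
    exact (hY0 y hy).choose.isLt
  have hfeas : ComMIPFeas ε M ρX X Y k a' b' s' u' := by
    refine ⟨?_, ?_, ?_, ?_, ?_, ?_, ?_, ?_⟩
    · intro i j
      rw [ha']
      by_cases h : (i : ℕ) < m
      · simp only [dif_pos h]; exact ha0 _ j
      · simp only [dif_neg h, Pi.zero_apply, abs_zero]; exact zero_le_one
    · intro i
      by_cases h : (i : ℕ) < m
      · exact ⟨hblb i h, hbub i h⟩
      · rw [hb']; simp only [dif_neg h]
        exact ⟨neg_nonpos_of_nonneg hdρX0, hdρX0⟩
    · intro y _ i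
      rw [hs']
      by_cases h : i = c y
      · right; simp [h]
      · left; simp [h]
    · intro i
      rw [hu']
      by_cases h : (i : ℕ) < m
      · right; simp [h]
      · left; simp [h]
    · intro i x hx
      by_cases h : (i : ℕ) < m
      · rw [ha', hb']; simp only [dif_pos h]
        exact Finset.le_sup' (fun x => ∑ j, a0 ⟨i, h⟩ j * (x j : ℝ)) hx
      · rw [ha', hb']; simp only [dif_neg h, Pi.zero_apply, zero_mul,
          Finset.sum_const_zero, le_refl]
    · intro y _
      rw [hs']
      simp [Finset.sum_ite_eq]
    · intro y hy i
      by_cases h : i = c y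
      · -- active inequality
        subst h
        have hcy : (c y : ℕ) < m := hcmem y hy
        have hcval : c y = Fin.castLE hmk (hY0 y hy).choose := by
          rw [hc]; simp only [dif_pos hy]
        have hval : ((c y : ℕ)) = (((hY0 y hy).choose : Fin m) : ℕ) := by
          rw [hcval]; rfl
        have hfin : (⟨(c y : ℕ), hcy⟩ : Fin m) = (hY0 y hy).choose :=
          Fin.ext hval
        have hs1 : s' y (c y) = 1 := by rw [hs']; simp
        rw [hs1]
        have hspec := (hY0 y hy).choose_spec
        have hbb := hbβ (c y) hcy
        rw [hfin] at hbb
        have haeq : a' (c y) = a0 (hY0 y hy).choose := by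
          rw [ha']; simp only [dif_pos hcy]; rw [hfin]
        rw [haeq]
        linarith
      · have hs0 : s' y i = 0 := by rw [hs']; simp [h]
        rw [hs0]
        by_cases h2 : (i : ℕ) < m
        · have h3 : -((d : ℝ) * ρY) ≤ ∑ j, a' i j * (y j : ℝ) := by
            have haeq : a' i = a0 ⟨i, h2⟩ := by rw [ha']; simp only [dif_pos h2]
            rw [haeq]
            exact neg_le_of_abs_le (abs_dot_le (ha0 _) (hρYle y hy))
          have h4 := hbub i h2
          have hM' : (d : ℝ) * ρX + (d : ℝ) * ρY + ε ≤ M := by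
            rw [hρXdef, hρYdef] at *
            nlinarith [hM]
          linarith
        · have haeq : ∑ j, a' i j * (y j : ℝ) = 0 := by
            rw [ha']; simp [dif_neg h2]
          have hbeq : b' i = 0 := by rw [hb']; simp [dif_neg h2]
          rw [haeq, hbeq]
          linarith
    · intro y hy i
      rw [hs', hu']
      by_cases h : i = c y
      · subst h
        simp [hcmem y hy]
      · simp only [if_neg h]
        by_cases h2 : (i : ℕ) < m <;> simp [h2]
  have hsumu : (∑ i, u' i) = (m : ℝ) := by
    rw [hu']
    rw [Fin.sum_univ_eq_sum_range (fun i => if i < m then (1 : ℝ) else 0) k]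
    have h2 : (Finset.range k).filter (fun i => i < m) = Finset.range m := by
      ext i
      simp only [Finset.mem_filter, Finset.mem_range]
      exact ⟨fun h => h.2, fun h => ⟨lt_of_lt_of_le h hmk, h⟩⟩
    rw [Finset.sum_ite, Finset.sum_const, Finset.sum_const, h2]
    simp
  have hmemS : (m : ℝ) ∈ {v : ℝ | ∃ (a : Fin k → Fin d → ℝ) (b : Fin k → ℝ)
      (s : (Fin d → ℤ) → Fin k → ℝ) (u : Fin k → ℝ),
      ComMIPFeas ε M ρX X Y k a b s u ∧ v = ∑ i, u i} :=
    ⟨a', b', s', u', hfeas, hsumu.symm⟩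
  have hlb : ∀ v ∈ {v : ℝ | ∃ (a : Fin k → Fin d → ℝ) (b : Fin k → ℝ)
      (s : (Fin d → ℤ) → Fin k → ℝ) (u : Fin k → ℝ),
      ComMIPFeas ε M ρX X Y k a b s u ∧ v = ∑ i, u i}, (m : ℝ) ≤ v := by
    rintro v ⟨a, b, s, u, hf, rfl⟩
    obtain ⟨hrel, hsum⟩ := feas_gives_relax hf
    have : m ≤ (Finset.univ.filter (fun i => u i = 1)).card := Nat.sInf_le hrel
    rw [hsum]
    exact_mod_cast this
  exact le_antisymm (csInf_le ⟨(m : ℝ), hlb⟩ hmemS) (le_csInf ⟨_, hmemS⟩ hlb)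
end

section
/- Let d ≥ 1, let X ⊆ ℤ^d be finite and lattice-convex, let Y ⊆ ℤ^d \ X be finite, and let ε > 0 be such that rc_ε(X,Y) exists. Then for every Y-hiding set H for X one has rc_ε(X,Y) ≥ |H|; in particular rc_ε(X,Y) ≥ H(X,Y). -/
/-- `H(X,Y)`: the maximum cardinality of a `Y`-hiding set for `X`. -/
noncomputable def maxHiding {d : ℕ} (X Y : Finset (Fin d → ℤ)) : ℕ :=
  sSup {n : ℕ | ∃ H : Finset (Fin d → ℤ), ↑H ⊆ (↑Y : Set (Fin d → ℤ)) ∧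
    IsHidingSet X ↑H ∧ H.card = n}


lemma hiding_le_relax {d : ℕ} {ε : ℝ} (hε : 0 < ε) {X Y : Finset (Fin d → ℤ)}
    {k : ℕ} (hrel : HasEpsRelax ε X Y k) (H : Finset (Fin d → ℤ))
    (hHY : ↑H ⊆ (↑Y : Set (Fin d → ℤ))) (hH : IsHidingSet X ↑H) :
    H.card ≤ k := by
  obtain ⟨a, β, -, hXle, hYge⟩ := hrel
  have hsep : ∀ y ∈ H, ∃ i, β i + ε ≤ ∑ j, a i j * (y j : ℝ) := fun y hy =>
    hYge y (hHY hy)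
  choose f hf using hsep
  have hconv : ∀ i, ∀ z ∈ convexHull ℝ (toR '' ↑X), (∑ j, a i j * z j) ≤ β i := by
    intro i z hz
    have hlin : IsLinearMap ℝ (fun z : Fin d → ℝ => ∑ j, a i j * z j) := by
      constructor
      · intro p q; simp [mul_add, Finset.sum_add_distrib]
      · intro c p; simp [Finset.mul_sum, mul_comm, mul_assoc, mul_left_comm]
    have hsub : convexHull ℝ (toR '' ↑X) ⊆ {z | (∑ j, a i j * z j) ≤ β i} :=
      convexHull_min (by rintro _ ⟨x, hx, rfl⟩; exact hXle i x hx)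
        (convex_halfSpace_le hlin (β i))
    exact hsub hz
  rcases H.eq_empty_or_nonempty with rfl | ⟨y0, hy0⟩
  · simp
  · have : Nonempty (Fin k) := ⟨f y0 hy0⟩
    classical
    let g : (Fin d → ℤ) → Fin k := fun y =>
      if h : y ∈ H then f y h else Classical.arbitrary _
    have hinj : Set.InjOn g ↑H := by
      intro y₁ h₁ y₂ h₂ heq
      by_contra hne
      simp only [Finset.mem_coe] at h₁ h₂
      have hg₁ : g y₁ = f y₁ h₁ := dif_pos h₁
      have hg₂ : g y₂ = f y₂ h₂ := dif_pos h₂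
      set i := f y₁ h₁ with hi
      have hieq : f y₂ h₂ = i := by rw [← hg₂, ← heq, hg₁]
      obtain ⟨z, hzseg, hzX⟩ := hH.2 y₁ h₁ y₂ h₂ hne
      rw [convexHull_pair] at hzseg
      obtain ⟨u, v, hu, hv, huv, hz⟩ := hzseg
      have h1 : β i + ε ≤ ∑ j, a i j * (y₁ j : ℝ) := hf y₁ h₁
      have h2 : β i + ε ≤ ∑ j, a i j * (y₂ j : ℝ) := by
        have := hf y₂ h₂; rwa [hieq] at this
      have hzval : (∑ j, a i j * z j)
          = u * (∑ j, a i j * (y₁ j : ℝ)) + v * (∑ j, a i j * (y₂ j : ℝ)) := by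
        rw [← hz]
        simp only [Pi.add_apply, Pi.smul_apply, smul_eq_mul, toR]
        rw [Finset.mul_sum, Finset.mul_sum, ← Finset.sum_add_distrib]
        exact Finset.sum_congr rfl (fun j _ => by ring)
      have hge : β i + ε ≤ ∑ j, a i j * z j := by
        rw [hzval]
        calc β i + ε = u * (β i + ε) + v * (β i + ε) := by rw [← add_mul, huv, one_mul]
        _ ≤ u * (∑ j, a i j * (y₁ j : ℝ)) + v * (∑ j, a i j * (y₂ j : ℝ)) :=
            add_le_add (mul_le_mul_of_nonneg_left h1 hu) (mul_le_mul_of_nonneg_left h2 hv)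
      have hle := hconv i z hzX
      linarith
    simpa using Finset.card_le_card_of_injOn (t := (Finset.univ : Finset (Fin k))) g
      (fun y _ => Finset.mem_univ (g y)) hinj

/-- `rc_ε(X,Y) ≥ |H|` for every `Y`-hiding set `H` for `X`;
in particular `rc_ε(X,Y) ≥ H(X,Y)`. -/
theorem stmt_16 {d : ℕ} (hd : 1 ≤ d) (X Y : Finset (Fin d → ℤ))
    (hX : LatticeConvex X) (hXY : ∀ y ∈ Y, y ∉ X) (ε : ℝ) (hε : 0 < ε)
    (hex : ∃ k, HasEpsRelax ε X Y k) :
    (∀ H : Finset (Fin d → ℤ), ↑H ⊆ (↑Y : Set (Fin d → ℤ)) → IsHidingSet X ↑H →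
      H.card ≤ rcEps ε X Y) ∧
    maxHiding X Y ≤ rcEps ε X Y := by
  have hmem : HasEpsRelax ε X Y (rcEps ε X Y) := Nat.sInf_mem hex
  have part1 : ∀ H : Finset (Fin d → ℤ), ↑H ⊆ (↑Y : Set (Fin d → ℤ)) →
      IsHidingSet X ↑H → H.card ≤ rcEps ε X Y :=
    fun H hHY hH => hiding_le_relax hε hmem H hHY hH
  refine ⟨part1, ?_⟩
  apply csSup_le
  · exact ⟨0, ∅, by simp, ⟨by simp, by simp⟩, by simp⟩
  · rintro n ⟨H, hHY, hH, rfl⟩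
    exact part1 H hHY hH
end
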